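/- Let ν ∈ [1/2, ∞) and let Ω ⊆ S_ν be a domain (open connected set). Suppose u is C² on Ω with Δu ≥ 0 pointwise on Ω (u is classically subharmonic), and limsup_{x→y, x∈Ω} u(x) ≤ 0 for every y ∈ ∂Ω. Then either u ≤ 0 throughout Ω, or liminf_{R→∞} M(R)/R^ν > 0, where M(R) = sup_{x ∈ ∂B(0,R) ∩ Ω} u(x). -/

import Mathlib

open Real Set Filter

/-- The planar sector `S_ν` of aperture `π/ν` with apex at the origin. -/
def Sector (ν : ℝ) : Set (ℝ × ℝ) :=
  {x | ∃ r φ : ℝ, 0 < r ∧ |φ| < π / (2*ν) ∧ x = (r * Real.cos φ, r * Real.sin φ)}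

/-- First partial derivative of `u : ℝ × ℝ → ℝ`. -/
noncomputable def pdx (u : ℝ × ℝ → ℝ) (x : ℝ × ℝ) : ℝ := fderiv ℝ u x ((1 : ℝ), (0 : ℝ))

/-- Second partial derivative of `u : ℝ × ℝ → ℝ`. -/
noncomputable def pdy (u : ℝ × ℝ → ℝ) (x : ℝ × ℝ) : ℝ := fderiv ℝ u x ((0 : ℝ), (1 : ℝ))

/-- The Laplacian `Δu`. -/
noncomputable def lap2 (u : ℝ × ℝ → ℝ) (x : ℝ × ℝ) : ℝ := pdx (pdx u) x + pdy (pdy u) x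

/-- `|∇u|²`. -/
noncomputable def gradSq (u : ℝ × ℝ → ℝ) (x : ℝ × ℝ) : ℝ := (pdx u x)^2 + (pdy u x)^2

/-- `⟨∇u, D²u · ∇u⟩`. -/
noncomputable def hessQ (u : ℝ × ℝ → ℝ) (x : ℝ × ℝ) : ℝ :=
  (pdx u x)^2 * pdx (pdx u) x + 2 * pdx u x * pdy u x * pdx (pdy u) x
    + (pdy u x)^2 * pdy (pdy u) x

/-- `u` satisfies the `p`-Laplace equation pointwise at `x`:
`|∇u(x)|² Δu(x) + (p-2) ⟨∇u(x), D²u(x) ∇u(x)⟩ = 0`. -/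
def PLaplaceAt (p : ℝ) (u : ℝ × ℝ → ℝ) (x : ℝ × ℝ) : Prop :=
  gradSq u x * lap2 u x + (p - 2) * hessQ u x = 0

/-- The circle `∂B(0,R)` in `ℝ × ℝ`. -/
def esphere (R : ℝ) : Set (ℝ × ℝ) := {x | x.1^2 + x.2^2 = R^2}

open Real Set Filter Topology

noncomputable def pd (d : ℝ × ℝ) (u : ℝ × ℝ → ℝ) (x : ℝ × ℝ) : ℝ := fderiv ℝ u x d

lemma fderiv_diffAt {f : ℝ × ℝ → ℝ} {V : Set (ℝ × ℝ)} (hV : IsOpen V)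
    (hf : ContDiffOn ℝ 2 f V) {x : ℝ × ℝ} (hx : x ∈ V) :
    DifferentiableAt ℝ (fderiv ℝ f) x :=
  ((hf.fderiv_of_isOpen hV (m := 1) (by norm_num)).differentiableOn one_ne_zero).differentiableAt
    (hV.mem_nhds hx)

lemma pd_diffAt (d : ℝ × ℝ) {f : ℝ × ℝ → ℝ} {V : Set (ℝ × ℝ)} (hV : IsOpen V)
    (hf : ContDiffOn ℝ 2 f V) {x : ℝ × ℝ} (hx : x ∈ V) :
    DifferentiableAt ℝ (pd d f) x := by
  have : pd d f = fun y => (ContinuousLinearMap.apply ℝ ℝ d) (fderiv ℝ f y) := rfl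
  rw [this]
  exact ((ContinuousLinearMap.apply ℝ ℝ d).differentiableAt).comp x (fderiv_diffAt hV hf hx)

lemma pd_add_smul (d : ℝ × ℝ) {f g : ℝ × ℝ → ℝ} {c : ℝ} {x : ℝ × ℝ}
    (hf : DifferentiableAt ℝ f x) (hg : DifferentiableAt ℝ g x) :
    pd d (fun y => f y + c * g y) x = pd d f x + c * pd d g x := by
  have h1 : fderiv ℝ (fun y => f y + c * g y) x = fderiv ℝ f x + c • fderiv ℝ g x := by
    rw [fderiv_fun_add hf (hg.const_mul c), fderiv_const_mul hg]
  simp [pd, h1]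

lemma pd_pd_add_smul (d d' : ℝ × ℝ) {f g : ℝ × ℝ → ℝ} {V W : Set (ℝ × ℝ)}
    (hV : IsOpen V) (hW : IsOpen W) (hf : ContDiffOn ℝ 2 f V) (hg : ContDiffOn ℝ 2 g W)
    {c : ℝ} {x : ℝ × ℝ} (hx : x ∈ V) (hxW : x ∈ W) :
    pd d' (pd d (fun y => f y + c * g y)) x = pd d' (pd d f) x + c * pd d' (pd d g) x := by
  have hev : (pd d fun y => f y + c * g y) =ᶠ[𝓝 x] (fun y => pd d f y + c * pd d g y) := by
    filter_upwards [(hV.inter hW).mem_nhds ⟨hx, hxW⟩] with y hy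
    exact pd_add_smul d
      ((hf.differentiableOn (by norm_num)).differentiableAt (hV.mem_nhds hy.1))
      ((hg.differentiableOn (by norm_num)).differentiableAt (hW.mem_nhds hy.2))
  have h1 : pd d' (pd d fun y => f y + c * g y) x
      = pd d' (fun y => pd d f y + c * pd d g y) x := by
    show (fderiv ℝ (pd d fun y => f y + c * g y) x) d'
      = (fderiv ℝ (fun y => pd d f y + c * pd d g y) x) d'
    rw [hev.fderiv_eq]
  rw [h1]
  exact pd_add_smul d' (pd_diffAt d hV hf hx) (pd_diffAt d hW hg hxW)
open Real Set Filter Topology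

lemma second_deriv_test {φ φ' : ℝ → ℝ} {a : ℝ} (hmax : IsLocalMax φ 0)
    (hd : ∀ᶠ t in 𝓝 (0:ℝ), HasDerivAt φ (φ' t) t) (hd2 : HasDerivAt φ' a 0) : a ≤ 0 := by
  by_contra hpos
  push_neg at hpos
  -- φ' 0 = 0
  have hφ'0 : φ' 0 = 0 := by
    have h0 : HasDerivAt φ (φ' 0) 0 := hd.self_of_nhds
    have := hmax.deriv_eq_zero
    rw [h0.deriv] at this; exact this
  -- slope of φ' at 0 tends to a
  have hslope : Tendsto (fun t => φ' t / t) (𝓝[≠] (0:ℝ)) (𝓝 a) := by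
    have := hasDerivAt_iff_tendsto_slope.mp hd2
    have heq : (fun t => φ' t / t) =ᶠ[𝓝[≠] (0:ℝ)] slope φ' 0 := by
      filter_upwards with t
      simp [slope, hφ'0, div_eq_inv_mul]
    exact this.congr' heq.symm
  have hsl : ∀ᶠ t in 𝓝[≠] (0:ℝ), 0 < φ' t / t :=
    hslope.eventually_mem (Ioi_mem_nhds hpos)
  have hsl' : ∀ᶠ t in 𝓝 (0:ℝ), t ≠ 0 → 0 < φ' t / t := eventually_nhdsWithin_iff.mp hsl
  obtain ⟨η, hη, hball⟩ := Metric.eventually_nhds_iff.mp (hd.and (hmax.and hsl'))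
  set t0 := η / 2 with ht0def
  have ht0 : 0 < t0 := by positivity
  have ht0' : ∀ t ∈ Icc (0:ℝ) t0, dist t 0 < η := by
    intro t ht
    rw [Real.dist_eq, sub_zero, abs_of_nonneg ht.1]
    calc t ≤ t0 := ht.2
    _ < η := by rw [ht0def]; linarith
  -- φ is strictly monotone on [0, t0]
  have hmono : StrictMonoOn φ (Icc 0 t0) := by
    apply strictMonoOn_of_deriv_pos (convex_Icc 0 t0)
    · intro t ht
      exact ((hball (ht0' t ht)).1).continuousAt.continuousWithinAt
    · intro t ht
      rw [interior_Icc] at ht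
      have hmem := hball (ht0' t ⟨le_of_lt ht.1, le_of_lt ht.2⟩)
      rw [hmem.1.deriv]
      have := hmem.2.2 (ne_of_gt ht.1)
      have htpos := ht.1
      have := (div_pos_iff.mp this).resolve_right (fun h => absurd htpos (not_lt.mpr (le_of_lt h.2)))
      exact this.1
  have h1 : φ 0 < φ t0 := hmono (left_mem_Icc.mpr (le_of_lt ht0))
    (right_mem_Icc.mpr (le_of_lt ht0)) ht0
  have h2 : φ t0 ≤ φ 0 := (hball (ht0' t0 ⟨le_of_lt ht0, le_rfl⟩)).2.1
  linarith
lemma pd_pd_nonpos_of_isLocalMax {w : ℝ × ℝ → ℝ} {V : Set (ℝ × ℝ)} (hV : IsOpen V)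
    (hw : ContDiffOn ℝ 2 w V) {z : ℝ × ℝ} (hz : z ∈ V) (hmax : IsLocalMax w z)
    (d : ℝ × ℝ) : pd d (pd d w) z ≤ 0 := by
  set L : ℝ → ℝ × ℝ := fun t => z + t • d with hLdef
  have hL : ∀ t : ℝ, HasDerivAt L d t := by
    intro t
    simpa [hLdef] using ((hasDerivAt_id t).smul_const d).const_add z
  have hLc : Continuous L := by fun_prop
  have hL0 : L 0 = z := by simp [hLdef]
  have hten : Tendsto L (𝓝 0) (𝓝 z) := by
    rw [← hL0]; exact hLc.continuousAt.tendsto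
  -- local max of φ = w ∘ L at 0
  have hmaxφ : IsLocalMax (w ∘ L) 0 := by
    have := hten.eventually hmax
    simpa [IsLocalMax, IsMaxFilter, hL0] using this
  -- derivative of φ
  have hdev : ∀ᶠ t in 𝓝 (0:ℝ), HasDerivAt (w ∘ L) (pd d w (L t)) t := by
    have hVnear : ∀ᶠ t in 𝓝 (0:ℝ), L t ∈ V := hten.eventually (hV.eventually_mem hz)
    filter_upwards [hVnear] with t ht
    have hwd : DifferentiableAt ℝ w (L t) :=
      (hw.differentiableOn (by norm_num)).differentiableAt (hV.mem_nhds ht)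
    exact (hwd.hasFDerivAt.comp_hasDerivAt t (hL t))
  -- second derivative of φ at 0
  have hd2 : HasDerivAt (fun t => pd d w (L t)) (pd d (pd d w) z) 0 := by
    have h1 : DifferentiableAt ℝ (pd d w) z := pd_diffAt d hV hw hz
    have h2 := h1.hasFDerivAt
    rw [← hL0] at h2
    have := h2.comp_hasDerivAt 0 (hL 0)
    rw [hL0] at this; exact this
  exact second_deriv_test hmaxφ hdev hd2
-- the auxiliary quadratic
lemma q_contDiff : ContDiff ℝ 2 (fun y : ℝ × ℝ => y.1 ^ 2 + y.2 ^ 2) :=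
  ((contDiff_fst.pow 2).add (contDiff_snd.pow 2))

lemma q_hasFDeriv (x : ℝ × ℝ) :
    HasFDerivAt (fun y : ℝ × ℝ => y.1 ^ 2 + y.2 ^ 2)
      ((2 * x.1) • ContinuousLinearMap.fst ℝ ℝ ℝ
        + (2 * x.2) • ContinuousLinearMap.snd ℝ ℝ ℝ) x := by
  have h1 := (hasFDerivAt_fst (𝕜 := ℝ) (p := x)).mul (hasFDerivAt_fst (𝕜 := ℝ) (p := x))
  have h2 := (hasFDerivAt_snd (𝕜 := ℝ) (p := x)).mul (hasFDerivAt_snd (𝕜 := ℝ) (p := x))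
  have h3 : HasFDerivAt (fun y : ℝ × ℝ => y.1 * y.1 + y.2 * y.2) _ x := h1.add h2
  have hfun : (fun y : ℝ × ℝ => y.1 * y.1 + y.2 * y.2)
      = fun y : ℝ × ℝ => y.1 ^ 2 + y.2 ^ 2 := by funext y; ring
  rw [hfun] at h3
  refine h3.congr_fderiv ?_
  ext <;> simp <;> ring

lemma q_pd1 : pd (1,0) (fun y : ℝ × ℝ => y.1 ^ 2 + y.2 ^ 2) = fun x : ℝ × ℝ => 2 * x.1 := by
  funext x
  rw [pd, (q_hasFDeriv x).fderiv]
  simp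

lemma q_pd2 : pd (0,1) (fun y : ℝ × ℝ => y.1 ^ 2 + y.2 ^ 2) = fun x : ℝ × ℝ => 2 * x.2 := by
  funext x
  rw [pd, (q_hasFDeriv x).fderiv]
  simp

lemma q_lap (x : ℝ × ℝ) :
    pd (1,0) (pd (1,0) (fun y : ℝ × ℝ => y.1 ^ 2 + y.2 ^ 2)) x
      + pd (0,1) (pd (0,1) (fun y : ℝ × ℝ => y.1 ^ 2 + y.2 ^ 2)) x = 4 := by
  rw [q_pd1, q_pd2]
  have h1 : HasFDerivAt (fun x : ℝ × ℝ => 2 * x.1)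
      ((2:ℝ) • ContinuousLinearMap.fst ℝ ℝ ℝ) x := by
    simpa using ((hasFDerivAt_fst (𝕜 := ℝ) (p := x)).const_mul (2:ℝ))
  have h2 : HasFDerivAt (fun x : ℝ × ℝ => 2 * x.2)
      ((2:ℝ) • ContinuousLinearMap.snd ℝ ℝ ℝ) x := by
    simpa using ((hasFDerivAt_snd (𝕜 := ℝ) (p := x)).const_mul (2:ℝ))
  rw [pd, pd, h1.fderiv, h2.fderiv]
  norm_num


theorem max_principle {V : Set (ℝ × ℝ)} {v : ℝ × ℝ → ℝ} (hVo : IsOpen V) (hVb : Bornology.IsBounded V)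
    (hv : ContDiffOn ℝ 2 v V)
    (hlap : ∀ x ∈ V, 0 ≤ pd (1,0) (pd (1,0) v) x + pd (0,1) (pd (0,1) v) x)
    (hb : ∀ y ∈ frontier V, ∀ ε : ℝ, 0 < ε → ∀ᶠ x in 𝓝[V] y, v x ≤ ε) :
    ∀ x ∈ V, v x ≤ 0 := by
  intro x0 hx0
  obtain ⟨C, hC⟩ : ∃ C, ∀ x ∈ V, x.1 ^ 2 + x.2 ^ 2 ≤ C := by
    obtain ⟨ρ, hρ⟩ := hVb.subset_closedBall 0
    refine ⟨2 * ρ ^ 2, fun x hx => ?_⟩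
    have h1 : ‖x‖ ≤ ρ := by simpa using hρ hx
    have h2 : |x.1| ≤ ρ := le_trans (by simpa using norm_fst_le x) h1
    have h3 : |x.2| ≤ ρ := le_trans (by simpa using norm_snd_le x) h1
    nlinarith [abs_nonneg x.1, abs_nonneg x.2, sq_abs x.1, sq_abs x.2]
  have hC0 : 0 ≤ C := le_trans (by positivity) (hC x0 hx0)
  have key : ∀ ε > (0:ℝ), ∀ δ > (0:ℝ), v x0 ≤ ε + δ * C := by
    intro ε hε δ hδ
    by_contra hcon
    push_neg at hcon
    set q : ℝ × ℝ → ℝ := fun y => y.1 ^ 2 + y.2 ^ 2 with hqdef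
    set w : ℝ × ℝ → ℝ := fun x => v x + δ * q x with hwdef
    set S : Set (ℝ × ℝ) := {x | x ∈ V ∧ w x0 ≤ w x} with hSdef
    have hSV : S ⊆ V := fun x hx => hx.1
    have hx0S : x0 ∈ S := ⟨hx0, le_rfl⟩
    have hTcpt : IsCompact (closure S) := ((hVb.subset hSV).isCompact_closure)
    have hTV : closure S ⊆ V := by
      intro y hyT
      by_contra hyV
      have hyF : y ∈ frontier V :=
        ⟨closure_mono hSV hyT, by simpa [hVo.interior_eq] using hyV⟩
      have hne : (𝓝[S] y).NeBot := mem_closure_iff_nhdsWithin_neBot.mp hyT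
      have hev : ∀ᶠ x in 𝓝[S] y, v x ≤ ε :=
        Filter.Eventually.filter_mono (nhdsWithin_mono y hSV) (hb y hyF ε hε)
      have hev2 : ∀ᶠ x in 𝓝[S] y, x ∈ S := eventually_mem_nhdsWithin
      obtain ⟨x, hx1, hx2⟩ := (hev.and hev2).exists
      have hwx : w x0 ≤ w x := hx2.2
      have hqx : q x ≤ C := hC x hx2.1
      have hq0 : (0:ℝ) ≤ q x0 := by positivity
      have : v x0 ≤ ε + δ * C := by
        have h1 : w x ≤ ε + δ * C := by
          rw [hwdef]
          have := mul_le_mul_of_nonneg_left hqx (le_of_lt hδ)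
          dsimp only
          linarith
        have h2 : v x0 ≤ w x0 := by
          rw [hwdef]; dsimp only; nlinarith
        linarith
      linarith
    have hwc : ContinuousOn w (closure S) := by
      apply ContinuousOn.mono _ hTV
      exact hv.continuousOn.add ((continuous_const.mul (by fun_prop)).continuousOn)
    obtain ⟨z, hzT, hzmax⟩ := hTcpt.exists_isMaxOn ⟨x0, subset_closure hx0S⟩ hwc
    have hzV : z ∈ V := hTV hzT
    have hloc : IsLocalMax w z := by
      have hmem : ∀ᶠ x in 𝓝 z, x ∈ V := hVo.eventually_mem hzV
      filter_upwards [hmem] with x hxV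
      by_cases h : w x0 ≤ w x
      · exact hzmax (subset_closure ⟨hxV, h⟩)
      · push_neg at h
        exact le_trans h.le (hzmax (subset_closure hx0S))
    have hw2 : ContDiffOn ℝ 2 w V :=
      hv.add ((contDiff_const.mul q_contDiff).contDiffOn)
    have h1 := pd_pd_nonpos_of_isLocalMax hVo hw2 hzV hloc (1,0)
    have h2 := pd_pd_nonpos_of_isLocalMax hVo hw2 hzV hloc (0,1)
    have e1 : pd (1,0) (pd (1,0) w) z
        = pd (1,0) (pd (1,0) v) z + δ * pd (1,0) (pd (1,0) q) z :=
      pd_pd_add_smul (1,0) (1,0) hVo isOpen_univ hv q_contDiff.contDiffOn hzV (mem_univ z)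
    have e2 : pd (0,1) (pd (0,1) w) z
        = pd (0,1) (pd (0,1) v) z + δ * pd (0,1) (pd (0,1) q) z :=
      pd_pd_add_smul (0,1) (0,1) hVo isOpen_univ hv q_contDiff.contDiffOn hzV (mem_univ z)
    have hq4 := q_lap z
    have hlapz := hlap z hzV
    rw [hqdef] at e1 e2
    nlinarith
  by_contra hcontra
  push_neg at hcontra
  have h1 := key (v x0 / 4) (by linarith) (v x0 / (4 * (C + 1))) (by positivity)
  have hCC : v x0 / (4 * (C + 1)) * C < v x0 / 2 := by
    rw [div_mul_eq_mul_div, div_lt_iff₀ (by positivity)]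
    nlinarith
  linarith

noncomputable def iotaL : (ℝ × ℝ) →L[ℝ] ℂ :=
  Complex.ofRealCLM.coprod (Complex.I • Complex.ofRealCLM)

lemma iotaL_apply (x : ℝ × ℝ) : iotaL x = (x.1 : ℂ) + x.2 * Complex.I := by
  simp [iotaL, mul_comm]

lemma iotaL_cont : Continuous (fun x : ℝ × ℝ => (x.1 : ℂ) + x.2 * Complex.I) := by
  fun_prop

/-- L1 : first derivative of `Re ∘ f ∘ ι`. -/
lemma hasFDerivAt_re_comp {f : ℂ → ℂ} {f' : ℂ} {x : ℝ × ℝ}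
    (hf : HasDerivAt f f' ((x.1 : ℂ) + x.2 * Complex.I)) :
    HasFDerivAt (fun y : ℝ × ℝ => (f ((y.1 : ℂ) + y.2 * Complex.I)).re)
      (Complex.reCLM.comp
        (((ContinuousLinearMap.smulRight (1 : ℂ →L[ℂ] ℂ) f').restrictScalars ℝ).comp iotaL))
      x := by
  have hι : HasFDerivAt (fun y : ℝ × ℝ => (y.1 : ℂ) + y.2 * Complex.I) iotaL x := by
    have := iotaL.hasFDerivAt (x := x)
    apply this.congr_fderiv ?_ |>.congr_of_eventuallyEq ?_
    · rfl
    · filter_upwards with y using (iotaL_apply y).symm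
  have h2 : HasFDerivAt f ((ContinuousLinearMap.smulRight (1 : ℂ →L[ℂ] ℂ) f').restrictScalars ℝ)
      ((x.1 : ℂ) + x.2 * Complex.I) := hf.hasFDerivAt.restrictScalars ℝ
  exact (Complex.reCLM.hasFDerivAt.comp x ((h2.comp x hι)))

/-- L2 : value form. -/
lemma pd_re_comp {U : Set ℂ} (hU : IsOpen U) {f : ℂ → ℂ} (hf : DifferentiableOn ℂ f U)
    (d : ℝ × ℝ) {x : ℝ × ℝ} (hx : ((x.1 : ℂ) + x.2 * Complex.I) ∈ U) :
    pd d (fun y : ℝ × ℝ => (f ((y.1 : ℂ) + y.2 * Complex.I)).re) x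
      = (((d.1 : ℂ) + d.2 * Complex.I) * deriv f ((x.1 : ℂ) + x.2 * Complex.I)).re := by
  have hder : HasDerivAt f (deriv f ((x.1 : ℂ) + x.2 * Complex.I))
      ((x.1 : ℂ) + x.2 * Complex.I) :=
    (hf.differentiableAt (hU.mem_nhds hx)).hasDerivAt
  rw [pd, (hasFDerivAt_re_comp hder).fderiv]
  simp [iotaL_apply, mul_comm]

/-- L3 : second derivative. -/
lemma pd_pd_re_comp {U : Set ℂ} (hU : IsOpen U) {f : ℂ → ℂ} (hf : DifferentiableOn ℂ f U)
    (d : ℝ × ℝ) {x : ℝ × ℝ} (hx : ((x.1 : ℂ) + x.2 * Complex.I) ∈ U) :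
    pd d (pd d (fun y : ℝ × ℝ => (f ((y.1 : ℂ) + y.2 * Complex.I)).re)) x
      = ((((d.1 : ℂ) + d.2 * Complex.I))^2
          * deriv (deriv f) ((x.1 : ℂ) + x.2 * Complex.I)).re := by
  set ι : ℝ × ℝ → ℂ := fun y => (y.1 : ℂ) + y.2 * Complex.I with hιdef
  set dc : ℂ := (d.1 : ℂ) + d.2 * Complex.I with hdcdef
  have hUo : IsOpen (ι ⁻¹' U) := hU.preimage iotaL_cont
  have hfd : DifferentiableOn ℂ (deriv f) U := (hf.analyticOnNhd hU).deriv.differentiableOn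
  have hg : DifferentiableOn ℂ (fun z => dc * deriv f z) U := hfd.const_mul dc
  have hev : pd d (fun y : ℝ × ℝ => (f (ι y)).re)
      =ᶠ[𝓝 x] fun y : ℝ × ℝ => ((fun z => dc * deriv f z) (ι y)).re := by
    filter_upwards [hUo.eventually_mem hx] with y hy
    exact pd_re_comp hU hf d hy
  have h1 : pd d (pd d (fun y : ℝ × ℝ => (f (ι y)).re)) x
      = pd d (fun y : ℝ × ℝ => ((fun z => dc * deriv f z) (ι y)).re) x := by
    show (fderiv ℝ (pd d fun y => (f (ι y)).re) x) d = _
    rw [hev.fderiv_eq]; rfl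
  rw [h1, pd_re_comp hU hg d hx]
  have hder : deriv (fun z => dc * deriv f z) (ι x) = dc * deriv (deriv f) (ι x) := by
    rw [deriv_const_mul]
    exact hfd.differentiableAt (hU.mem_nhds hx)
  rw [hder]
  show (dc * (dc * deriv (deriv f) (ι x))).re = (dc ^ 2 * deriv (deriv f) (ι x)).re
  ring_nf

/-- Laplacian of the real part of a holomorphic function vanishes. -/
lemma lap_re_comp {U : Set ℂ} (hU : IsOpen U) {f : ℂ → ℂ} (hf : DifferentiableOn ℂ f U)
    {x : ℝ × ℝ} (hx : ((x.1 : ℂ) + x.2 * Complex.I) ∈ U) :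
    pd (1,0) (pd (1,0) (fun y : ℝ × ℝ => (f ((y.1 : ℂ) + y.2 * Complex.I)).re)) x
      + pd (0,1) (pd (0,1) (fun y : ℝ × ℝ => (f ((y.1 : ℂ) + y.2 * Complex.I)).re)) x = 0 := by
  rw [pd_pd_re_comp hU hf (1,0) hx, pd_pd_re_comp hU hf (0,1) hx]
  have : (((0:ℝ) : ℂ) + (1:ℝ) * Complex.I)^2 = -(((1:ℝ):ℂ) + (0:ℝ)*Complex.I)^2 := by
    simp [Complex.I_sq]
  rw [this]
  simp [neg_mul]

/-- smoothness of the real part composition. -/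
lemma contDiffOn_re_comp {U : Set ℂ} (hU : IsOpen U) {f : ℂ → ℂ}
    (hf : DifferentiableOn ℂ f U) :
    ContDiffOn ℝ 2 (fun y : ℝ × ℝ => (f ((y.1 : ℂ) + y.2 * Complex.I)).re)
      ((fun y : ℝ × ℝ => (y.1 : ℂ) + y.2 * Complex.I) ⁻¹' U) := by
  have h1 : ContDiffOn ℂ 2 f U := (hf.analyticOnNhd hU).contDiffOn (by exact hU.uniqueDiffOn)
  have h2 : ContDiffOn ℝ 2 f U := h1.restrict_scalars ℝ
  have hfun : (fun y : ℝ × ℝ => (y.1 : ℂ) + y.2 * Complex.I) = iotaL := by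
    funext y; rw [iotaL_apply]
  have hι : ContDiff ℝ 2 (fun y : ℝ × ℝ => (y.1 : ℂ) + y.2 * Complex.I) := by
    rw [hfun]; exact iotaL.contDiff
  have h3 : ContDiffOn ℝ 2 (fun y : ℝ × ℝ => f ((y.1 : ℂ) + y.2 * Complex.I))
      ((fun y : ℝ × ℝ => (y.1 : ℂ) + y.2 * Complex.I) ⁻¹' U) :=
    h2.comp hι.contDiffOn (fun y hy => hy)
  exact Complex.reCLM.contDiff.comp_contDiffOn h3
/-- The open sector in `ℂ`. -/
def SectorC (ν : ℝ) : Set ℂ := {z | z ∈ Complex.slitPlane ∧ |Complex.arg z| < π / (2*ν)}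

lemma sectorC_open (ν : ℝ) : IsOpen (SectorC ν) := by
  rw [isOpen_iff_mem_nhds]
  intro z hz
  have h1 : ∀ᶠ w in nhds z, w ∈ Complex.slitPlane :=
    Complex.isOpen_slitPlane.eventually_mem hz.1
  have h2 : ContinuousAt (fun w => |Complex.arg w|) z :=
    continuous_abs.continuousAt.comp (Complex.continuousAt_arg hz.1)
  have h3 : ∀ᶠ w in nhds z, |Complex.arg w| < π / (2*ν) :=
    h2.eventually_mem (Iio_mem_nhds hz.2)
  filter_upwards [h1, h3] with w hw1 hw2
  exact ⟨hw1, hw2⟩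

variable {ν R : ℝ}

/-- The barrier holomorphic function. -/
noncomputable def FF (ν R : ℝ) (z : ℂ) : ℂ :=
  2 * (z / R) ^ (ν : ℂ) / (1 + ((z / R) ^ (ν : ℂ)) ^ 2)

lemma re_cpow_nu {z : ℂ} (hz : z ≠ 0) (ν : ℝ) :
    (z ^ (ν : ℂ)).re = ‖z‖ ^ ν * Real.cos (ν * Complex.arg z) := by
  rw [Complex.cpow_def_of_ne_zero hz, Complex.exp_re]
  have h1 : (Complex.log z * (ν:ℂ)).re = Real.log ‖z‖ * ν := by
    simp [Complex.log_re]
  have h2 : (Complex.log z * (ν:ℂ)).im = Complex.arg z * ν := by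
    simp [Complex.log_im]
  rw [h1, h2, Real.rpow_def_of_pos (norm_pos_iff.mpr hz)]
  ring_nf

lemma abs_cpow_nu {z : ℂ} (hz : z ≠ 0) (ν : ℝ) :
    ‖z ^ (ν : ℂ)‖ = ‖z‖ ^ ν := by
  rw [Complex.norm_cpow_of_ne_zero hz]
  simp

lemma div_real_mem_sectorC (hR : 0 < R) {z : ℂ} (hz : z ∈ SectorC ν) :
    z / (R:ℂ) ∈ SectorC ν := by
  have h1 : z / (R:ℂ) = ((R⁻¹ : ℝ) : ℂ) * z := by
    push_cast; field_simp
  constructor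
  · rw [h1]
    rcases hz.1 with h | h
    · left; simpa [Complex.mul_re] using by positivity
    · right; simp only [Complex.mul_im, Complex.ofReal_re, Complex.ofReal_im]
      simpa using mul_ne_zero (by positivity : (R:ℝ)⁻¹ ≠ 0) h
  · rw [h1, Complex.arg_real_mul z (by positivity : (0:ℝ) < R⁻¹)]
    exact hz.2

lemma arg_div_real (hR : 0 < R) (z : ℂ) : Complex.arg (z / (R:ℂ)) = Complex.arg z := by
  have h1 : z / (R:ℂ) = ((R⁻¹ : ℝ) : ℂ) * z := by push_cast; field_simp
  rw [h1, Complex.arg_real_mul z (by positivity : (0:ℝ) < R⁻¹)]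

lemma ne_zero_of_mem_sectorC {z : ℂ} (hz : z ∈ SectorC ν) : z ≠ 0 :=
  Complex.slitPlane_ne_zero hz.1

/-- Real part of `w = (z/R)^ν` is positive on the sector. -/
lemma re_w_pos (hν : 1/2 ≤ ν) (hR : 0 < R) {z : ℂ} (hz : z ∈ SectorC ν) :
    0 < (((z / R) ^ (ν : ℂ))).re := by
  have hν0 : 0 < ν := by linarith
  have hz' : z / (R:ℂ) ∈ SectorC ν := div_real_mem_sectorC hR hz
  have hne : z / (R:ℂ) ≠ 0 := ne_zero_of_mem_sectorC hz'
  rw [re_cpow_nu hne]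
  have habs : 0 < ‖z / R‖ := norm_pos_iff.mpr hne
  have harg : |ν * Complex.arg (z / (R:ℂ))| < π / 2 := by
    rw [abs_mul, abs_of_pos hν0]
    have := hz'.2
    calc ν * |Complex.arg (z / (R:ℂ))| < ν * (π / (2*ν)) := by
          apply mul_lt_mul_of_pos_left this hν0
    _ = π / 2 := by field_simp
  have hcos : 0 < Real.cos (ν * Complex.arg (z / (R:ℂ))) :=
    Real.cos_pos_of_mem_Ioo ⟨neg_lt_of_abs_lt harg, lt_of_abs_lt harg⟩
  positivity

lemma one_add_sq_ne_zero {w : ℂ} (hw : 0 < w.re) : 1 + w ^ 2 ≠ 0 := by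
  intro h
  have h2 : (w - Complex.I) * (w + Complex.I) = 0 := by
    have h4 : w ^ 2 + 1 = 0 := by linear_combination h
    have h5 : Complex.I ^ 2 = -1 := Complex.I_sq
    linear_combination h4 - h5
  rcases mul_eq_zero.mp h2 with h3 | h3
  · have : w = Complex.I := by linear_combination h3
    rw [this] at hw; simp at hw
  · have : w = -Complex.I := by linear_combination h3
    rw [this] at hw; simp at hw

/-- `Re (2w/(1+w²)) ≥ 0` when `Re w > 0`. -/
lemma re_F_nonneg {w : ℂ} (hw : 0 < w.re) : 0 ≤ (2 * w / (1 + w ^ 2)).re := by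
  rw [Complex.div_re]
  have h1 : (2 * w).re * (1 + w ^ 2).re + (2 * w).im * (1 + w ^ 2).im
      = 2 * w.re * (1 + w.re ^ 2 + w.im ^ 2) := by
    simp [Complex.mul_re, Complex.mul_im, Complex.add_re, Complex.add_im, pow_two]
    ring
  have h2 : 0 ≤ Complex.normSq (1 + w ^ 2) := Complex.normSq_nonneg _
  have h3 : 0 ≤ 2 * w.re * (1 + w.re ^ 2 + w.im ^ 2) := by positivity
  have h4 : (2 * w).re * (1 + w ^ 2).re / Complex.normSq (1 + w ^ 2)
      + (2 * w).im * (1 + w ^ 2).im / Complex.normSq (1 + w ^ 2)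
      = (2 * w.re * (1 + w.re ^ 2 + w.im ^ 2)) / Complex.normSq (1 + w ^ 2) := by
    rw [← add_div, h1]
  rw [h4]
  positivity

/-- `Re (2w/(1+w²)) ≥ 1` when `|w| = 1`, `Re w > 0`. -/
lemma re_F_ge_one {w : ℂ} (hw : 0 < w.re) (habs : ‖w‖ = 1) :
    1 ≤ (2 * w / (1 + w ^ 2)).re := by
  have hn : Complex.normSq w = 1 := by
    rw [← Complex.sq_norm, habs]; norm_num
  have hpq : w.re ^ 2 + w.im ^ 2 = 1 := by
    have := Complex.normSq_apply w
    nlinarith [hn, this]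
  have hre1 : w.re ≤ 1 := by nlinarith
  have h1 : (2 * w / (1 + w ^ 2)).re = 1 / w.re := by
    rw [Complex.div_re]
    have e1 : (1 + w ^ 2).re = 2 * w.re ^ 2 := by
      simp [Complex.add_re, pow_two, Complex.mul_re]; nlinarith
    have e2 : (1 + w ^ 2).im = 2 * w.re * w.im := by
      simp [Complex.add_im, pow_two, Complex.mul_im]; ring
    have e3 : Complex.normSq (1 + w ^ 2) = (1 + w^2).re ^ 2 + (1 + w^2).im ^ 2 := by
      rw [Complex.normSq_apply]; ring
    rw [e3, e1, e2]
    have e4 : (2 * w).re = 2 * w.re := by simp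
    have e5 : (2 * w).im = 2 * w.im := by simp
    rw [e4, e5]
    have hden : (2 * w.re ^ 2) ^ 2 + (2 * w.re * w.im) ^ 2 = 4 * w.re ^ 2 := by nlinarith
    rw [hden]
    field_simp
    nlinarith
  rw [h1]
  rw [le_div_iff₀ hw]
  linarith

/-- `Re (2w/(1+w²)) ≤ (8/3)|w|` when `|w| ≤ 1/2`. -/
lemma re_F_le {w : ℂ} (habs : ‖w‖ ≤ 1/2) :
    (2 * w / (1 + w ^ 2)).re ≤ 8/3 * ‖w‖ := by
  have h1 : (2 * w / (1 + w ^ 2)).re ≤ ‖2 * w / (1 + w ^ 2)‖ :=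
    Complex.re_le_norm _
  have h2 : (3:ℝ)/4 ≤ ‖1 + w ^ 2‖ := by
    have h3 : (1:ℝ) = ‖(1 + w^2) + (-w^2)‖ := by norm_num
    have h4 : ‖(1 + w^2) + (-w^2)‖ ≤ ‖1 + w^2‖ + ‖w^2‖ := by
      calc ‖(1 + w^2) + (-w^2)‖ ≤ ‖1+w^2‖ + ‖-w^2‖ :=
            norm_add_le _ _
      _ = ‖1+w^2‖ + ‖w^2‖ := by rw [norm_neg]
    have h5 : ‖w ^ 2‖ ≤ 1/4 := by
      rw [norm_pow]
      nlinarith [norm_nonneg w]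
    linarith [h3 ▸ h4]
  calc (2 * w / (1 + w ^ 2)).re ≤ ‖2 * w / (1 + w ^ 2)‖ := h1
  _ = 2 * ‖w‖ / ‖1 + w ^ 2‖ := by
      rw [norm_div, norm_mul]; norm_num
  _ ≤ 2 * ‖w‖ / (3/4) := by
      apply div_le_div_of_nonneg_left (by positivity) (by norm_num) h2
  _ = 8/3 * ‖w‖ := by ring

/-- differentiability of the barrier. -/
lemma FF_differentiableOn (hν : 1/2 ≤ ν) (hR : 0 < R) :
    DifferentiableOn ℂ (FF ν R) (SectorC ν) := by
  have hw : DifferentiableOn ℂ (fun z => (z / (R:ℂ)) ^ (ν : ℂ)) (SectorC ν) := by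
    intro z hz
    apply DifferentiableAt.differentiableWithinAt
    have hd : HasDerivAt (fun z : ℂ => z / (R:ℂ)) (1 / (R:ℂ)) z := by
      simpa using (hasDerivAt_id z).div_const (R:ℂ)
    exact (hd.cpow_const ((div_real_mem_sectorC hR hz).1)).differentiableAt
  apply DifferentiableOn.div
  · exact hw.const_mul 2
  · exact (hw.pow 2).const_add 1
  · intro z hz
    exact one_add_sq_ne_zero (re_w_pos hν hR hz)
lemma pi_div_le {ν : ℝ} (hν : 1/2 ≤ ν) : π / (2*ν) ≤ π := by
  have h1 : (1:ℝ) ≤ 2*ν := by linarith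
  calc π / (2*ν) ≤ π / 1 := by
        apply div_le_div_of_nonneg_left Real.pi_pos.le one_pos h1
  _ = π := by ring

lemma sector_point {ν : ℝ} (hν : 1/2 ≤ ν) {r φ : ℝ} (hr : 0 < r) (hφ : |φ| < π / (2*ν)) :
    (((r * Real.cos φ : ℝ) : ℂ) + ((r * Real.sin φ : ℝ) : ℂ) * Complex.I) ∈ SectorC ν ∧
    ‖((r * Real.cos φ : ℝ) : ℂ) + ((r * Real.sin φ : ℝ) : ℂ) * Complex.I‖ = r ∧
    Complex.arg (((r * Real.cos φ : ℝ) : ℂ) + ((r * Real.sin φ : ℝ) : ℂ) * Complex.I) = φ := by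
  have hφπ : |φ| < π := lt_of_lt_of_le hφ (pi_div_le hν)
  have hzeq : (((r * Real.cos φ : ℝ) : ℂ) + ((r * Real.sin φ : ℝ) : ℂ) * Complex.I)
      = (r : ℂ) * (Complex.cos (φ:ℂ) + Complex.sin (φ:ℂ) * Complex.I) := by
    rw [← Complex.ofReal_cos, ← Complex.ofReal_sin]
    push_cast; ring
  have hIoc : φ ∈ Set.Ioc (-π) π :=
    ⟨neg_lt_of_abs_lt hφπ, le_of_lt (lt_of_abs_lt hφπ)⟩
  have harg : Complex.arg (((r * Real.cos φ : ℝ) : ℂ) + ((r * Real.sin φ : ℝ) : ℂ) * Complex.I)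
      = φ := by
    rw [hzeq]
    exact Complex.arg_mul_cos_add_sin_mul_I hr hIoc
  have habs : ‖((r * Real.cos φ : ℝ) : ℂ) + ((r * Real.sin φ : ℝ) : ℂ) * Complex.I‖
      = r := by
    rw [hzeq, norm_mul, Complex.norm_real, Real.norm_eq_abs, Complex.norm_cos_add_sin_mul_I,
      abs_of_pos hr, mul_one]
  have hne : (((r * Real.cos φ : ℝ) : ℂ) + ((r * Real.sin φ : ℝ) : ℂ) * Complex.I) ≠ 0 := by
    intro h
    rw [h] at habs
    simp at habs
    linarith
  refine ⟨⟨Complex.mem_slitPlane_iff_arg.mpr ⟨?_, hne⟩, ?_⟩, habs, harg⟩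
  · rw [harg]; intro h; rw [h] at hφπ; simp [abs_of_pos Real.pi_pos] at hφπ
  · rw [harg]; exact hφ

lemma sector_subset_preimage {ν : ℝ} (hν : 1/2 ≤ ν) {x : ℝ × ℝ} (hx : x ∈ Sector ν) :
    ((x.1 : ℂ) + (x.2 : ℝ) * Complex.I) ∈ SectorC ν := by
  obtain ⟨r, φ, hr, hφ, hxe⟩ := hx
  rw [hxe]
  exact (sector_point hν hr hφ).1

lemma esphere_abs {R : ℝ} (hR : 0 < R) {y : ℝ × ℝ} (hy : y ∈ esphere R) :
    ‖(y.1 : ℂ) + (y.2 : ℝ) * Complex.I‖ = R := by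
  rw [Complex.norm_def]
  have h1 : Complex.normSq ((y.1 : ℂ) + (y.2 : ℝ) * Complex.I) = y.1 ^ 2 + y.2 ^ 2 := by
    rw [Complex.normSq_add_mul_I]
  rw [h1, hy]
  exact Real.sqrt_sq hR.le

/-- Boundedness of u on the sphere piece. -/
lemma bddAbove_u_sphere {Ω : Set (ℝ × ℝ)} (hΩopen : IsOpen Ω) {u : ℝ × ℝ → ℝ}
    (hu : ContinuousOn u Ω)
    (hbdry : ∀ y ∈ frontier Ω, ∀ ε : ℝ, 0 < ε → ∀ᶠ x in nhdsWithin y Ω, u x ≤ ε)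
    (R : ℝ) : BddAbove (u '' (esphere R ∩ Ω)) := by
  set K' : Set (ℝ × ℝ) := esphere R ∩ closure Ω with hK'def
  have hK'cl : IsClosed K' := by
    apply IsClosed.inter _ isClosed_closure
    have : esphere R = (fun x : ℝ × ℝ => x.1 ^ 2 + x.2 ^ 2) ⁻¹' {R ^ 2} := rfl
    rw [this]
    exact isClosed_singleton.preimage (by fun_prop)
  have hK'bd : Bornology.IsBounded K' := by
    apply Bornology.IsBounded.subset (Metric.isBounded_closedBall (x := (0 : ℝ × ℝ)) (r := |R|))
    intro x hx
    have hx1 : x.1 ^ 2 + x.2 ^ 2 = R ^ 2 := hx.1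
    have h1 : |x.1| ≤ |R| := by
      have : x.1 ^ 2 ≤ R ^ 2 := by nlinarith [sq_nonneg x.2]
      have := Real.sqrt_le_sqrt this
      rwa [Real.sqrt_sq_eq_abs, Real.sqrt_sq_eq_abs] at this
    have h2 : |x.2| ≤ |R| := by
      have : x.2 ^ 2 ≤ R ^ 2 := by nlinarith [sq_nonneg x.1]
      have := Real.sqrt_le_sqrt this
      rwa [Real.sqrt_sq_eq_abs, Real.sqrt_sq_eq_abs] at this
    rw [Metric.mem_closedBall, dist_zero_right, Prod.norm_def]
    simp only [Real.norm_eq_abs]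
    exact max_le h1 h2
  have hK'cpt : IsCompact K' := Metric.isCompact_of_isClosed_isBounded hK'cl hK'bd
  have claim : ∀ y ∈ K', ∃ b : ℝ, ∀ᶠ x in nhds y, x ∈ Ω → u x ≤ b := by
    intro y hy
    have hy2 : y ∈ Ω ∪ frontier Ω := by
      have h := hy.2
      rw [closure_eq_interior_union_frontier, hΩopen.interior_eq] at h
      exact h
    rcases hy2 with hyΩ | hyF
    · have hc : ContinuousAt u y := hu.continuousAt (hΩopen.mem_nhds hyΩ)
      refine ⟨u y + 1, ?_⟩
      have := hc.eventually_mem (Iio_mem_nhds (lt_add_one (u y)))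
      filter_upwards [this] with x hx _
      exact le_of_lt hx
    · refine ⟨1, ?_⟩
      have := hbdry y hyF 1 one_pos
      rwa [eventually_nhdsWithin_iff] at this
  choose b hb using claim
  obtain ⟨t, hsub⟩ := hK'cpt.elim_nhds_subcover' (fun y hy => {x | x ∈ Ω → u x ≤ b y hy})
    (fun y hy => hb y hy)
  by_cases ht : t.Nonempty
  · refine ⟨t.sup' ht (fun y => b y.1 y.2), ?_⟩
    rintro a ⟨x, ⟨hxs, hxΩ⟩, rfl⟩
    have hxK' : x ∈ K' := ⟨hxs, subset_closure hxΩ⟩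
    obtain ⟨y, hyt, hxy⟩ := Set.mem_iUnion₂.mp (hsub hxK')
    exact le_trans (hxy hxΩ) (Finset.le_sup' (fun y => b y.1 y.2) hyt)
  · refine ⟨0, ?_⟩
    rintro a ⟨x, ⟨hxs, hxΩ⟩, rfl⟩
    have hxK' : x ∈ K' := ⟨hxs, subset_closure hxΩ⟩
    obtain ⟨y, hyt, _⟩ := Set.mem_iUnion₂.mp (hsub hxK')
    exact absurd ⟨y, hyt⟩ ht

lemma lap2_eq (f : ℝ × ℝ → ℝ) (x : ℝ × ℝ) :
    lap2 f x = pd (1,0) (pd (1,0) f) x + pd (0,1) (pd (0,1) f) x := rfl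

set_option maxHeartbeats 2000000 in
theorem statement_17 (ν : ℝ) (hν : 1/2 ≤ ν) (Ω : Set (ℝ × ℝ))
    (hΩopen : IsOpen Ω) (hΩconn : IsConnected Ω) (hΩsub : Ω ⊆ Sector ν)
    (u : ℝ × ℝ → ℝ) (hu : ContDiffOn ℝ 2 u Ω)
    (hsub : ∀ x ∈ Ω, 0 ≤ lap2 u x)
    -- limsup_{x → y, x ∈ Ω} u(x) ≤ 0 for every boundary point y
    (hbdry : ∀ y ∈ frontier Ω, ∀ ε : ℝ, 0 < ε → ∀ᶠ x in nhdsWithin y Ω, u x ≤ ε) :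
    (∀ x ∈ Ω, u x ≤ 0) ∨
    -- liminf_{R → ∞} M(R)/R^ν > 0, where M(R) = sup_{∂B(0,R) ∩ Ω} u
    (∃ ε : ℝ, 0 < ε ∧ ∀ᶠ R in Filter.atTop,
      ε ≤ sSup (u '' (esphere R ∩ Ω)) / R ^ ν) := by
  by_cases hpos : ∀ x ∈ Ω, u x ≤ 0
  · exact Or.inl hpos
  right
  push_neg at hpos
  obtain ⟨x0, hx0Ω, hx0pos⟩ := hpos
  obtain ⟨r0, φ0, hr0, hφ0, hx0eq⟩ := hΩsub hx0Ω
  have hν0 : 0 < ν := by linarith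
  have hr0ν : 0 < r0 ^ ν := Real.rpow_pos_of_pos hr0 ν
  set m := u x0 with hm
  refine ⟨3 * m / (8 * r0 ^ ν), by positivity, ?_⟩
  have h2ν : (1:ℝ) < (2:ℝ) ^ ((1:ℝ)/ν) :=
    (Real.one_lt_rpow_iff_of_pos (by norm_num)).mpr (Or.inl ⟨one_lt_two, by positivity⟩)
  set R0 := r0 * (2:ℝ) ^ ((1:ℝ)/ν) with hR0
  have hR0pos : 0 < R0 := by positivity
  filter_upwards [eventually_ge_atTop R0] with R hR
  have hRpos : 0 < R := lt_of_lt_of_le hR0pos hR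
  have hr0R : r0 < R := by nlinarith
  -- the sector preimage
  set W : Set (ℝ × ℝ) :=
    (fun y : ℝ × ℝ => (y.1 : ℂ) + (y.2 : ℝ) * Complex.I) ⁻¹' (SectorC ν) with hWdef
  have hWopen : IsOpen W := (sectorC_open ν).preimage iotaL_cont
  have hΩW : Ω ⊆ W := fun x hx => sector_subset_preimage hν (hΩsub hx)
  -- barrier
  set H : ℝ × ℝ → ℝ :=
    fun y => (FF ν R ((y.1 : ℂ) + (y.2 : ℝ) * Complex.I)).re with hHdef
  have hFdiff : DifferentiableOn ℂ (FF ν R) (SectorC ν) := FF_differentiableOn hν hRpos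
  have hHcd : ContDiffOn ℝ 2 H W := contDiffOn_re_comp (sectorC_open ν) hFdiff
  have hHnonneg : ∀ x ∈ W, 0 ≤ H x := fun x hx => re_F_nonneg (re_w_pos hν hRpos hx)
  -- sup on the sphere
  set M := sSup (u '' (esphere R ∩ Ω)) with hMdef
  set K := max M 0 with hKdef
  have hK0 : 0 ≤ K := le_max_right _ _
  have hbdd := bddAbove_u_sphere hΩopen hu.continuousOn hbdry R
  have huleK : ∀ y ∈ esphere R ∩ Ω, u y ≤ K :=
    fun y hy => le_trans (le_csSup hbdd ⟨y, hy, rfl⟩) (le_max_left _ _)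
  -- the truncated domain
  set B : Set (ℝ × ℝ) := {x | x.1 ^ 2 + x.2 ^ 2 < R ^ 2} with hBdef
  have hBopen : IsOpen B := isOpen_lt (by fun_prop) continuous_const
  set V := Ω ∩ B with hVdef
  have hVopen : IsOpen V := hΩopen.inter hBopen
  have hVΩ : V ⊆ Ω := inter_subset_left
  have hVbd : Bornology.IsBounded V := by
    apply Bornology.IsBounded.subset (Metric.isBounded_closedBall (x := (0 : ℝ × ℝ)) (r := |R|))
    intro x hx
    have hx1 : x.1 ^ 2 + x.2 ^ 2 < R ^ 2 := hx.2
    have h1 : |x.1| ≤ |R| := by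
      have h : x.1 ^ 2 ≤ R ^ 2 := by nlinarith [sq_nonneg x.2]
      have := Real.sqrt_le_sqrt h
      rwa [Real.sqrt_sq_eq_abs, Real.sqrt_sq_eq_abs] at this
    have h2 : |x.2| ≤ |R| := by
      have h : x.2 ^ 2 ≤ R ^ 2 := by nlinarith [sq_nonneg x.1]
      have := Real.sqrt_le_sqrt h
      rwa [Real.sqrt_sq_eq_abs, Real.sqrt_sq_eq_abs] at this
    rw [Metric.mem_closedBall, dist_zero_right, Prod.norm_def]
    simp only [Real.norm_eq_abs]
    exact max_le h1 h2
  -- the comparison function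
  set v : ℝ × ℝ → ℝ := fun x => u x + (-K) * H x with hvdef
  have hvcd : ContDiffOn ℝ 2 v V := by
    apply ContDiffOn.add (hu.mono hVΩ)
    exact ContDiffOn.mul contDiffOn_const ((hHcd.mono (fun x hx => hΩW (hVΩ hx))))
  have hlapv : ∀ x ∈ V, 0 ≤ pd (1,0) (pd (1,0) v) x + pd (0,1) (pd (0,1) v) x := by
    intro x hx
    have hxΩ : x ∈ Ω := hVΩ hx
    have hxW : x ∈ W := hΩW hxΩ
    have e1 := pd_pd_add_smul (1,0) (1,0) hΩopen hWopen hu hHcd (c := -K) hxΩ hxW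
    have e2 := pd_pd_add_smul (0,1) (0,1) hΩopen hWopen hu hHcd (c := -K) hxΩ hxW
    have hHlap : pd (1,0) (pd (1,0) H) x + pd (0,1) (pd (0,1) H) x = 0 :=
      lap_re_comp (sectorC_open ν) hFdiff hxW
    have hul := hsub x hxΩ
    rw [lap2_eq] at hul
    rw [e1, e2]
    have h0 : (-K) * pd (1,0) (pd (1,0) H) x + (-K) * pd (0,1) (pd (0,1) H) x = 0 := by
      rw [← mul_add, hHlap, mul_zero]
    linarith
  -- boundary condition for v on frontier V
  have hbV : ∀ y ∈ frontier V, ∀ ε : ℝ, 0 < ε → ∀ᶠ x in nhdsWithin y V, v x ≤ ε := by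
    intro y hyF ε hε
    have caseA : y ∈ frontier Ω → ∀ᶠ x in nhdsWithin y V, v x ≤ ε := by
      intro hyΩF
      have h1 : ∀ᶠ x in nhdsWithin y V, u x ≤ ε :=
        Filter.Eventually.filter_mono (nhdsWithin_mono y hVΩ) (hbdry y hyΩF ε hε)
      filter_upwards [h1, eventually_mem_nhdsWithin] with x hx hxV
      have hH0 : 0 ≤ H x := hHnonneg x (hΩW (hVΩ hxV))
      have := mul_nonneg hK0 hH0
      show u x + -K * H x ≤ ε
      linarith
    have hsub2 := frontier_inter_subset Ω B
    rcases hsub2 hyF with h | h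
    · exact caseA h.1
    · -- y ∈ closure Ω ∩ frontier B
      have hyB : y ∈ esphere R := by
        have := frontier_lt_subset_eq (f := fun x : ℝ × ℝ => x.1 ^ 2 + x.2 ^ 2)
          (g := fun _ => R ^ 2) (by fun_prop) continuous_const h.2
        exact this
      have hyCl := h.1
      rw [closure_eq_interior_union_frontier, hΩopen.interior_eq] at hyCl
      rcases hyCl with hyΩ | hyΩF
      · -- y ∈ Ω on the sphere: v y ≤ 0 and v is continuous; conclude
        have hyW : y ∈ W := hΩW hyΩ
        have hHy1 : 1 ≤ H y := by
          have hzS : ((y.1 : ℂ) + (y.2 : ℝ) * Complex.I) ∈ SectorC ν := hyW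
          have hne : ((y.1 : ℂ) + (y.2 : ℝ) * Complex.I) / (R:ℂ) ≠ 0 :=
            ne_zero_of_mem_sectorC (div_real_mem_sectorC hRpos hzS)
          have habs1 : ‖(((y.1 : ℂ) + (y.2 : ℝ) * Complex.I) / (R:ℂ)) ^ (ν:ℂ)‖
              = 1 := by
            rw [abs_cpow_nu hne, norm_div, Complex.norm_real, Real.norm_eq_abs, abs_of_pos hRpos,
              esphere_abs hRpos hyB, div_self (ne_of_gt hRpos), Real.one_rpow]
          exact re_F_ge_one (re_w_pos hν hRpos hzS) habs1
        have hvy : v y ≤ 0 := by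
          have huy : u y ≤ K := huleK y ⟨hyB, hyΩ⟩
          have h6 : 0 ≤ K * (H y - 1) := mul_nonneg hK0 (by linarith)
          show u y + -K * H y ≤ 0
          nlinarith
        have hvc : ContinuousAt v y := by
          have hu1 : ContinuousAt u y := hu.continuousOn.continuousAt (hΩopen.mem_nhds hyΩ)
          have hH1 : ContinuousAt H y :=
            (hHcd.continuousOn).continuousAt (hWopen.mem_nhds hyW)
          exact hu1.add (continuousAt_const.mul hH1)
        have := hvc.eventually_mem (Iio_mem_nhds (lt_of_le_of_lt hvy hε))
        have h2 : ∀ᶠ x in nhdsWithin y V, v x ∈ Iio ε :=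
          Filter.Eventually.filter_mono nhdsWithin_le_nhds this
        filter_upwards [h2] with x hx
        exact le_of_lt hx
      · exact caseA hyΩF
  -- apply the maximum principle
  have hvle := max_principle hVopen hVbd hvcd hlapv hbV
  -- x0 ∈ V
  have hx0V : x0 ∈ V := by
    refine ⟨hx0Ω, ?_⟩
    show x0.1 ^ 2 + x0.2 ^ 2 < R ^ 2
    rw [hx0eq]
    have hident : (r0 * Real.cos φ0) ^ 2 + (r0 * Real.sin φ0) ^ 2 = r0 ^ 2 := by
      have h := Real.sin_sq_add_cos_sq φ0
      nlinarith [h]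
    simp only
    rw [hident]
    nlinarith
  have hmain := hvle x0 hx0V
  -- bound H x0
  have hx0W : x0 ∈ W := hΩW hx0Ω
  have hzS : ((x0.1 : ℂ) + (x0.2 : ℝ) * Complex.I) ∈ SectorC ν := hx0W
  have hne : ((x0.1 : ℂ) + (x0.2 : ℝ) * Complex.I) / (R:ℂ) ≠ 0 :=
    ne_zero_of_mem_sectorC (div_real_mem_sectorC hRpos hzS)
  have habs0 : ‖(x0.1 : ℂ) + (x0.2 : ℝ) * Complex.I‖ = r0 := by
    rw [hx0eq]
    exact (sector_point hν hr0 hφ0).2.1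
  have habsw : ‖(((x0.1 : ℂ) + (x0.2 : ℝ) * Complex.I) / (R:ℂ)) ^ (ν:ℂ)‖
      = (r0 / R) ^ ν := by
    rw [abs_cpow_nu hne, norm_div, Complex.norm_real, Real.norm_eq_abs, abs_of_pos hRpos, habs0]
  have hhalf : (r0 / R) ^ ν ≤ 1/2 := by
    have h1 : r0 / R ≤ (2:ℝ) ^ (-(1:ℝ)/ν) := by
      have h2 : r0 / R ≤ r0 / R0 :=
        div_le_div_of_nonneg_left hr0.le hR0pos hR
      have h3 : r0 / R0 = ((2:ℝ) ^ ((1:ℝ)/ν))⁻¹ := by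
        rw [hR0]; field_simp
      have h4 : ((2:ℝ) ^ ((1:ℝ)/ν))⁻¹ = (2:ℝ) ^ (-(1:ℝ)/ν) := by
        rw [← Real.rpow_neg (by norm_num)]; ring_nf
      rw [h3, h4] at h2; exact h2
    calc (r0 / R) ^ ν ≤ ((2:ℝ) ^ (-(1:ℝ)/ν)) ^ ν :=
          Real.rpow_le_rpow (by positivity) h1 hν0.le
    _ = (2:ℝ) ^ ((-(1:ℝ)/ν) * ν) := by
        rw [← Real.rpow_mul (by norm_num : (0:ℝ) ≤ 2)]
    _ = 1/2 := by
        rw [show (-(1:ℝ)/ν) * ν = -1 by field_simp]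
        rw [Real.rpow_neg_one]; norm_num
  have hHx0 : H x0 ≤ 8/3 * (r0 / R) ^ ν := by
    have := re_F_le (w := (((x0.1 : ℂ) + (x0.2 : ℝ) * Complex.I) / (R:ℂ)) ^ (ν:ℂ))
      (by rw [habsw]; exact hhalf)
    rw [habsw] at this
    exact this
  -- conclude
  have hmK : m ≤ K * (8/3 * (r0 / R) ^ ν) := by
    have h1 : m ≤ K * H x0 := by
      have h2 : u x0 + -K * H x0 ≤ 0 := hmain
      show u x0 ≤ K * H x0
      linarith
    calc m ≤ K * H x0 := h1
    _ ≤ K * (8/3 * (r0 / R) ^ ν) := by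
        apply mul_le_mul_of_nonneg_left hHx0 hK0
  have hdiv : (r0 / R) ^ ν = r0 ^ ν / R ^ ν := Real.div_rpow hr0.le hRpos.le ν
  have hRν : 0 < R ^ ν := Real.rpow_pos_of_pos hRpos ν
  have hKpos : 0 < K := by
    by_contra hc
    push_neg at hc
    have : K * (8/3 * (r0 / R) ^ ν) ≤ 0 := by
      apply mul_nonpos_of_nonpos_of_nonneg hc
      positivity
    linarith
  have hMK : K = M := by
    rcases le_or_gt M 0 with hM0 | hM0
    · exfalso; rw [hKdef] at hKpos; rw [max_eq_right hM0] at hKpos; exact lt_irrefl 0 hKpos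
    · rw [hKdef]; exact max_eq_left hM0.le
  rw [hMK, hdiv] at hmK
  rw [div_le_div_iff₀ (by positivity) hRν]
  have h5 : M * (8/3 * (r0 ^ ν / R ^ ν)) * R ^ ν = 8/3 * (M * r0 ^ ν) := by
    field_simp
  nlinarith [mul_le_mul_of_nonneg_right hmK hRν.le]
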